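/- arXiv:1209.4122 — 5 statements merged into one kernel-verified Lean document; each statement's English description precedes it below -/
import Mathlib

section
/- Let (X, H, Y) be an sl₂-triple of n×n real matrices, let ν be any n×n real matrix, and let t > 0 be a real number. Set γ_t = exp(−(ln t / 2)·H), the matrix exponential, which is an invertible n×n real matrix. Then the map ξ ↦ t·(γ_t ξ γ_t⁻¹) restricts to a bijection from O_ν ∩ (X + Z(Y)) onto O_{tν} ∩ (X + Z(Y)), where O_M := {g M g⁻¹ : g ∈ GL(n,ℝ)}. -/
/-!
Conjugation by `γ_t = exp (-(log t / 2) • H)` multiplies the `ad H`-eigenvectors `X` and `Y`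
by `t⁻¹` and `t`. Hence `ξ ↦ t • γ_t ξ γ_t⁻¹` fixes `X`, preserves the centralizer of `Y` (it
sends `Y` to a nonzero multiple of itself) and carries the conjugacy class of `ν` into that of
`t • ν`. Its inverse is the map of the same shape for `γ_t⁻¹` and `t⁻¹`, so it is a bijection.
-/

open Set

section ScaledConjugation

variable {𝕜 A : Type*} [Field 𝕜] [Ring A] [Algebra 𝕜 A]

def conjOrbit (ν : A) : Set A := {M | ∃ g : Aˣ, M = g * ν * ↑g⁻¹}

def slodowySlice (X Y : A) : Set A := {M | ∃ C, C * Y = Y * C ∧ M = X + C}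

theorem Units.inv_conj_eq_inv_smul {u : Aˣ} {X : A} {c : 𝕜} (hc : c ≠ 0)
    (h : (u : A) * X * ↑u⁻¹ = c • X) : (↑u⁻¹ : A) * X * u = c⁻¹ • X := by
  rw [eq_inv_smul_iff₀ hc, ← smul_mul_assoc, ← mul_smul_comm, ← h]
  simp [mul_assoc]

theorem smul_conj_mem_conjOrbit_smul {ν ξ : A} (u : Aˣ) (t : 𝕜) (hξ : ξ ∈ conjOrbit ν) :
    t • ((u : A) * ξ * ↑u⁻¹) ∈ conjOrbit (t • ν) := by
  obtain ⟨g, rfl⟩ := hξ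
  exact ⟨u * g, by simp [mul_assoc]⟩

theorem Commute.units_conj_left_of_conj_eq_smul {C Y : A} {u : Aˣ} {t : 𝕜} (ht : t ≠ 0)
    (hY : (u : A) * Y * ↑u⁻¹ = t • Y) (hC : Commute C Y) : Commute ((u : A) * C * ↑u⁻¹) Y := by
  have hconj : Commute ((u : A) * C * ↑u⁻¹) (u * Y * ↑u⁻¹) := by
    simp only [Commute, SemiconjBy, mul_assoc, Units.inv_mul_cancel_left]
    rw [← mul_assoc C, hC.eq, mul_assoc]
  rwa [hY, Commute.smul_right_iff₀ ht] at hconj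

theorem smul_conj_mem_slodowySlice {X Y ξ : A} {u : Aˣ} {t : 𝕜} (ht : t ≠ 0)
    (hX : (u : A) * X * ↑u⁻¹ = t⁻¹ • X) (hY : (u : A) * Y * ↑u⁻¹ = t • Y)
    (hξ : ξ ∈ slodowySlice X Y) : t • ((u : A) * ξ * ↑u⁻¹) ∈ slodowySlice X Y := by
  obtain ⟨C, hC, rfl⟩ := hξ
  have hconj := Commute.units_conj_left_of_conj_eq_smul ht hY hC
  refine ⟨t • (u * C * ↑u⁻¹), (hconj.smul_left t).eq, ?_⟩
  rw [mul_add, add_mul, smul_add, hX, smul_inv_smul₀ ht]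

theorem mapsTo_smul_conj {X Y : A} (ν : A) {u : Aˣ} {t : 𝕜} (ht : t ≠ 0)
    (hX : (u : A) * X * ↑u⁻¹ = t⁻¹ • X) (hY : (u : A) * Y * ↑u⁻¹ = t • Y) :
    MapsTo (fun ξ => t • ((u : A) * ξ * ↑u⁻¹)) (conjOrbit ν ∩ slodowySlice X Y)
      (conjOrbit (t • ν) ∩ slodowySlice X Y) := fun _ hξ =>
  ⟨smul_conj_mem_conjOrbit_smul u t hξ.1, smul_conj_mem_slodowySlice ht hX hY hξ.2⟩

theorem bijOn_smul_conj {X Y : A} (ν : A) {u : Aˣ} {t : 𝕜} (ht : t ≠ 0)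
    (hX : (u : A) * X * ↑u⁻¹ = t⁻¹ • X) (hY : (u : A) * Y * ↑u⁻¹ = t • Y) :
    BijOn (fun ξ => t • ((u : A) * ξ * ↑u⁻¹)) (conjOrbit ν ∩ slodowySlice X Y)
      (conjOrbit (t • ν) ∩ slodowySlice X Y) := by
  have hback := mapsTo_smul_conj (u := u⁻¹) (t • ν) (inv_ne_zero ht)
    (by simpa using Units.inv_conj_eq_inv_smul (inv_ne_zero ht) hX)
    (by simpa using Units.inv_conj_eq_inv_smul ht hY)
  rw [inv_smul_smul₀ ht] at hback
  refine InvOn.bijOn ⟨fun ξ _ => ?_, fun ξ _ => ?_⟩ (mapsTo_smul_conj ν ht hX hY) hback <;>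
    simp [mul_assoc, smul_smul, ht]

end ScaledConjugation

section MatrixExp

open NormedSpace

variable {m : Type*} [Fintype m] [DecidableEq m]

theorem Matrix.exp_smul_one (r : ℝ) : exp (r • (1 : Matrix m m ℝ)) = Real.exp r • 1 := by
  rw [← Algebra.algebraMap_eq_smul_one, ← Algebra.algebraMap_eq_smul_one, Real.exp_eq_exp_ℝ]
  open scoped Matrix.Norms.Operator in exact (algebraMap_exp_comm r).symm

noncomputable def Matrix.expUnit (H : Matrix m m ℝ) : (Matrix m m ℝ)ˣ where
  val := exp H
  inv := exp (-H)
  val_inv := by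
    rw [← Matrix.exp_add_of_commute _ _ (Commute.refl H).neg_right, add_neg_cancel, exp_zero]
  inv_val := by
    rw [← Matrix.exp_add_of_commute _ _ (Commute.refl H).neg_left, neg_add_cancel, exp_zero]

theorem Matrix.exp_smul_conj_of_commutator_eq_smul {H A : Matrix m m ℝ} {c : ℝ}
    (h : H * A - A * H = c • A) (s : ℝ) :
    exp (s • H) * A * exp (-(s • H)) = Real.exp (s * c) • A := by
  have hsemi : SemiconjBy A (s • H + (s * c) • 1) (s • H) := by
    rw [SemiconjBy, mul_add, mul_smul_comm, mul_smul_comm, mul_one, smul_mul_assoc,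
      sub_eq_iff_eq_add.mp h, smul_add, smul_smul, add_comm]
  have hexp : SemiconjBy A (exp (s • H + (s * c) • 1)) (exp (s • H)) := by
    open scoped Matrix.Norms.Operator in exact hsemi.exp_right
  rw [SemiconjBy, Matrix.exp_add_of_commute _ _ ((Commute.one_right _).smul_right _),
    Matrix.exp_smul_one, mul_smul_comm, mul_one] at hexp
  have hinv : exp (s • H) * exp (-(s • H)) = 1 := (expUnit (s • H)).mul_inv
  rw [← hexp, mul_assoc, smul_mul_assoc, hinv, mul_smul_comm, mul_one]

end MatrixExp

open NormedSpace in
theorem scaling_bijOn_orbit_inter_slice_general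
    {n : ℕ} (X H Y ν : Matrix (Fin n) (Fin n) ℝ)
    (hHX : H * X - X * H = (2 : ℝ) • X)
    (hHY : H * Y - Y * H = (-2 : ℝ) • Y)
    (t : ℝ) (ht : 0 < t) :
    ∃ γinv : Matrix (Fin n) (Fin n) ℝ,
      exp ((-(Real.log t / 2)) • H) * γinv = 1 ∧
      γinv * exp ((-(Real.log t / 2)) • H) = 1 ∧
      Set.BijOn (fun ξ : Matrix (Fin n) (Fin n) ℝ =>
          t • (exp ((-(Real.log t / 2)) • H) * ξ * γinv))
        ({M | ∃ g : GL (Fin n) ℝ,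
            M = (g : Matrix (Fin n) (Fin n) ℝ) * ν * (↑g⁻¹ : Matrix (Fin n) (Fin n) ℝ)} ∩
          {M | ∃ C, C * Y = Y * C ∧ M = X + C})
        ({M | ∃ g : GL (Fin n) ℝ,
            M = (g : Matrix (Fin n) (Fin n) ℝ) * (t • ν) * (↑g⁻¹ : Matrix (Fin n) (Fin n) ℝ)} ∩
          {M | ∃ C, C * Y = Y * C ∧ M = X + C}) := by
  set s := -(Real.log t / 2)
  have hX : exp (s • H) * X * exp (-(s • H)) = t⁻¹ • X := by
    rw [Matrix.exp_smul_conj_of_commutator_eq_smul hHX,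
      show s * 2 = -Real.log t by ring, Real.exp_neg, Real.exp_log ht]
  have hY : exp (s • H) * Y * exp (-(s • H)) = t • Y := by
    rw [Matrix.exp_smul_conj_of_commutator_eq_smul hHY,
      show s * -2 = Real.log t by ring, Real.exp_log ht]
  let γ := Matrix.expUnit (s • H)
  refine ⟨exp (-(s • H)), γ.mul_inv, γ.inv_mul, ?_⟩
  exact bijOn_smul_conj (u := γ) ν ht.ne' hX hY

open NormedSpace in
/-- The scaling identity `O_{tν} ∩ S_X = t γ_t (O_ν ∩ S_X)` from Section 4: for `t > 0`
and `γ_t = exp(-(ln t / 2) H)`, the map `ξ ↦ t γ_t ξ γ_t⁻¹` is a bijection from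
`O_ν ∩ (X + Z(Y))` onto `O_{tν} ∩ (X + Z(Y))`.  (The matrix `γ_t` is invertible, with
inverse `exp((ln t / 2) H)`.) -/
theorem scaling_bijOn_orbit_inter_slice
    {n : ℕ} (X H Y ν : Matrix (Fin n) (Fin n) ℝ)
    (hX0 : X ≠ 0)
    (hHX : H * X - X * H = (2 : ℝ) • X)
    (hHY : H * Y - Y * H = (-2 : ℝ) • Y)
    (hXY : X * Y - Y * X = H)
    (t : ℝ) (ht : 0 < t) :
    ∃ γinv : Matrix (Fin n) (Fin n) ℝ,
      exp ((-(Real.log t / 2)) • H) * γinv = 1 ∧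
      γinv * exp ((-(Real.log t / 2)) • H) = 1 ∧
      Set.BijOn (fun ξ : Matrix (Fin n) (Fin n) ℝ =>
          t • (exp ((-(Real.log t / 2)) • H) * ξ * γinv))
        ({M | ∃ g : GL (Fin n) ℝ,
            M = (g : Matrix (Fin n) (Fin n) ℝ) * ν * (↑g⁻¹ : Matrix (Fin n) (Fin n) ℝ)} ∩
          {M | ∃ C, C * Y = Y * C ∧ M = X + C})
        ({M | ∃ g : GL (Fin n) ℝ,
            M = (g : Matrix (Fin n) (Fin n) ℝ) * (t • ν) * (↑g⁻¹ : Matrix (Fin n) (Fin n) ℝ)} ∩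
          {M | ∃ C, C * Y = Y * C ∧ M = X + C}) :=
  scaling_bijOn_orbit_inter_slice_general X H Y ν hHX hHY t ht
end

section
/- Let (X, H, Y) be an sl₂-triple of n×n real matrices. Then the ℝ-linear subspaces {[A, X] : A ∈ Matrix (Fin n) (Fin n) ℝ} and Z(Y) = {B : BY = YB} of the space of n×n real matrices are complementary: their intersection is {0} and their sum is the whole matrix space, so Matrix (Fin n) (Fin n) ℝ = [𝔤, X] ⊕ Z_𝔤(Y) as a direct sum of subspaces. -/
/-!
The operators `E = ad X`, `F = ad Y` and `ad H` form an `sl₂`-triple of endomorphisms of the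
finite-dimensional space `𝔤`, with `[𝔤, X] = range E` and `Z_𝔤(Y) = ker F`. By rank–nullity,
`range E ⊕ ker F = 𝔤` follows from `ker E ∩ range F = 0` together with the same statement for
the reversed triple `(-H, F, E)`, which is `ker F ∩ range E = 0`.

For `ker E ∩ range F = 0`: `E` and `F` are nilpotent, because `[H, Eᵏ] = 2k Eᵏ`. If `w = F u`
and `E w = 0`, the identity `F E^(j+1) u = -(j+1) Eʲ (H + j) u` shows inductively that
`H (H + 1) ⋯ (H + m) u = 0` as soon as `E^(m+1) u = 0`, so `w` is killed by
`(H + 2) ⋯ (H + m + 2)`. The same argument for the reversed triple shows that `w` is killed by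
`H (H - 1) ⋯ (H - n)`. These two polynomials in `H` are coprime, hence `w = 0`.
-/

open Polynomial
open LinearMap (ker range)

attribute [local instance] LieRing.ofAssociativeRing

theorem SemiconjBy.aeval {R A : Type*} [CommSemiring R] [Semiring A] [Algebra R A] {a x y : A}
    (h : SemiconjBy a x y) (p : R[X]) : SemiconjBy a (aeval x p) (aeval y p) := by
  induction p using Polynomial.induction_on with
  | C r => simpa [SemiconjBy] using (Algebra.commutes r a).symm
  | add p q hp hq => simpa using hp.add_right hq
  | monomial n r hp => simpa [pow_succ, ← mul_assoc] using hp.mul_right h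

theorem IsCoprime.of_isUnit_add {R : Type*} [CommSemiring R] {a b : R} (h : IsUnit (a + b)) :
    IsCoprime a b :=
  ⟨↑h.unit⁻¹, ↑h.unit⁻¹, by rw [← mul_add, h.val_inv_mul]⟩

theorem isCoprime_ascPochhammer_comp_X_add_two_comp_neg_X {K : Type*} [Field K] [CharZero K]
    (m n : ℕ) :
    IsCoprime ((ascPochhammer K m).comp (X + 2)) ((ascPochhammer K n).comp (-X)) := by
  have hlin (i j : ℕ) :
      IsCoprime ((X + (i : K[X])).comp (X + 2)) ((X + (j : K[X])).comp (-X)) := by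
    refine IsCoprime.of_isUnit_add ?_
    have hsum : (X + (i : K[X])).comp (X + 2) + (X + (j : K[X])).comp (-X)
        = C ((i + j + 2 : ℕ) : K) := by
      simp only [add_comp, X_comp, natCast_comp, map_natCast]; push_cast; ring
    rw [hsum, isUnit_C, isUnit_iff_ne_zero]
    exact Nat.cast_ne_zero.mpr (by omega)
  induction m with
  | zero => simp [isCoprime_one_left]
  | succ m ihm =>
    rw [ascPochhammer_succ_right, mul_comp]
    refine ihm.mul_left ?_
    clear ihm
    induction n with
    | zero => simp [isCoprime_one_right]
    | succ n ihn =>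
      rw [ascPochhammer_succ_right, mul_comp]
      exact ihn.mul_right (hlin m n)

theorem LinearMap.finrank_range_le_finrank_range_of_disjoint {K U V W : Type*} [Field K]
    [AddCommGroup U] [Module K U] [AddCommGroup V] [Module K V] [AddCommGroup W] [Module K W]
    [FiniteDimensional K V] {F : U →ₗ[K] V} {E : V →ₗ[K] W} (h : Disjoint (range F) (ker E)) :
    Module.finrank K (range F) ≤ Module.finrank K (range E) := by
  rw [← LinearMap.finrank_range_of_inj (LinearMap.injective_domRestrict_iff.mpr h)]
  exact Submodule.finrank_mono (LinearMap.range_domRestrict_le_range _ _)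

theorem LinearMap.isCompl_range_ker_of_disjoint {K V : Type*} [Field K] [AddCommGroup V]
    [Module K V] [FiniteDimensional K V] {E F : Module.End K V}
    (h₁ : Disjoint (range E) (ker F)) (h₂ : Disjoint (range F) (ker E)) :
    IsCompl (range E) (ker F) := by
  refine (Submodule.isCompl_iff_disjoint _ _ ?_).mpr h₁
  have := F.finrank_range_add_finrank_ker
  have := finrank_range_le_finrank_range_of_disjoint h₂
  omega

theorem isNilpotent_of_lie_eq_smul {K A : Type*} [Field K] [CharZero K] [Ring A] [Algebra K A]
    [FiniteDimensional K A] {a x : A} {c : K} (hc : c ≠ 0) (h : ⁅a, x⁆ = c • x) :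
    IsNilpotent x := by
  rw [Ring.lie_def] at h
  let T : Module.End K A := LinearMap.mulLeft K a - LinearMap.mulRight K a
  have hT : ∀ k : ℕ, T (x ^ k) = (k * c) • x ^ k := by
    intro k
    induction k with
    | zero => simp [T]
    | succ k ih =>
      have hsplit : T (x ^ (k + 1)) = T (x ^ k) * x + x ^ k * (a * x - x * a) := by
        simp only [T, pow_succ, LinearMap.sub_apply, LinearMap.mulLeft_apply,
          LinearMap.mulRight_apply]
        noncomm_ring
      rw [hsplit, ih, h, smul_mul_assoc, mul_smul_comm, ← pow_succ, ← add_smul]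
      push_cast; ring_nf
  by_contra hx
  have hev : ∀ k : ℕ, T.HasEigenvalue (k * c) := fun k =>
    Module.End.hasEigenvalue_of_hasEigenvector
      ⟨Module.End.mem_eigenspace_iff.mpr (hT k), fun h0 => hx ⟨k, h0⟩⟩
  refine Set.infinite_of_injective_forall_mem (fun i j hij => ?_) hev T.finite_hasEigenvalue
  exact_mod_cast mul_right_cancel₀ hc hij

namespace IsSl2Triple

section CommRing

variable {R V : Type*} [CommRing R] [AddCommGroup V] [Module R V] {H E F : Module.End R V}

theorem semiconjBy_e (t : IsSl2Triple H E F) : SemiconjBy E (H + 2) H := by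
  have := t.lie_h_e_nsmul
  rw [Ring.lie_def, sub_eq_iff_eq_add, two_nsmul] at this
  rw [SemiconjBy, this]; noncomm_ring

theorem semiconjBy_f (t : IsSl2Triple H E F) : SemiconjBy F H (H + 2) := by
  have := t.lie_h_f_nsmul
  rw [Ring.lie_def, sub_eq_iff_eq_add, two_nsmul] at this
  rw [SemiconjBy, add_mul, this]; noncomm_ring

theorem e_mul_f (t : IsSl2Triple H E F) : E * F = F * E + H := by
  rw [← t.lie_e_f, Ring.lie_def]; abel

theorem commute_e_mul_f_aeval (t : IsSl2Triple H E F) (p : R[X]) :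
    Commute (E * F) (aeval H p) :=
  (t.semiconjBy_e.aeval p).mul_left (t.semiconjBy_f.aeval p)

theorem h_mul_e_pow (t : IsSl2Triple H E F) (k : ℕ) :
    H * E ^ k = E ^ k * (H + (2 * k : ℕ)) := by
  induction k with
  | zero => simp
  | succ k ih =>
    have hE : SemiconjBy E (H + 2 + (2 * k : ℕ)) (H + (2 * k : ℕ)) :=
      t.semiconjBy_e.add_right (Nat.cast_commute _ _).symm
    rw [pow_succ, ← mul_assoc, ih, mul_assoc, ← hE.eq, ← mul_assoc, add_assoc,
      ← Nat.cast_ofNat, ← Nat.cast_add]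
    congr 3
    ring

theorem f_e_pow_succ_apply (t : IsSl2Triple H E F) {u : V} (hu : E (F u) = 0) (j : ℕ) :
    F ((E ^ (j + 1)) u) = -((j + 1 : ℕ) : R) • (E ^ j) ((H + j) u) := by
  have hEF : ∀ v, F (E v) = E (F v) - H v := fun v => by
    rw [← Module.End.mul_apply, ← Module.End.mul_apply, t.e_mul_f]; simp
  induction j with
  | zero => simp [hEF, hu]
  | succ j ih =>
    rw [pow_succ', Module.End.mul_apply, hEF, ih, ← Module.End.mul_apply H, t.h_mul_e_pow,
      Module.End.mul_apply, map_smul, ← Module.End.mul_apply E, ← pow_succ']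
    simp only [LinearMap.add_apply, Module.End.natCast_apply, map_add, map_nsmul]
    push_cast
    module

end CommRing

section Field

variable {K V : Type*} [Field K] [CharZero K] [AddCommGroup V] [Module K V]
  {H E F : Module.End K V}

theorem e_pow_apply_add_natCast_eq_zero (t : IsSl2Triple H E F) {u : V} (hu : E (F u) = 0)
    {m : ℕ} (hm : (E ^ (m + 1)) u = 0) : (E ^ m) ((H + m) u) = 0 := by
  have := t.f_e_pow_succ_apply hu m
  rw [hm, map_zero, eq_comm, smul_eq_zero, neg_eq_zero, Nat.cast_eq_zero] at this
  exact this.resolve_left (Nat.succ_ne_zero m)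

theorem aeval_ascPochhammer_apply_eq_zero (t : IsSl2Triple H E F) {u : V} (hu : E (F u) = 0)
    {m : ℕ} (hm : (E ^ (m + 1)) u = 0) : aeval H (ascPochhammer K (m + 1)) u = 0 := by
  induction m generalizing u with
  | zero => simpa using t.e_pow_apply_add_natCast_eq_zero hu hm
  | succ m ih =>
    have hX : aeval H (X + ((m + 1 : ℕ) : K[X])) = H + (m + 1 : ℕ) := by simp
    rw [ascPochhammer_succ_right, map_mul, Module.End.mul_apply, hX]
    refine ih ?_ (t.e_pow_apply_add_natCast_eq_zero hu hm)
    rw [← hX, ← Module.End.mul_apply E, ← Module.End.mul_apply,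
      (t.commute_e_mul_f_aeval _).eq, Module.End.mul_apply, Module.End.mul_apply, hu, map_zero]

variable [FiniteDimensional K V]

theorem isNilpotent_e (t : IsSl2Triple H E F) : IsNilpotent E :=
  isNilpotent_of_lie_eq_smul two_ne_zero (t.lie_h_e_smul K)

theorem disjoint_ker_e_range_f (t : IsSl2Triple H E F) : Disjoint (ker E) (range F) := by
  rw [Submodule.disjoint_def]
  rintro _ hw ⟨u, rfl⟩
  rw [LinearMap.mem_ker] at hw
  obtain ⟨m, hm⟩ := t.isNilpotent_e
  obtain ⟨n, hn⟩ := t.symm.isNilpotent_e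
  have hp : aeval H (ascPochhammer K (m + 1)) u = 0 :=
    t.aeval_ascPochhammer_apply_eq_zero hw (by simp [pow_succ, hm])
  have hq : aeval (-H) (ascPochhammer K (n + 1)) (F u) = 0 :=
    t.symm.aeval_ascPochhammer_apply_eq_zero (by simp [hw]) (by simp [pow_succ, hn])
  refine Submodule.disjoint_def.mp (disjoint_ker_aeval_of_isCoprime H
    (isCoprime_ascPochhammer_comp_X_add_two_comp_neg_X (m + 1) (n + 1))) _ ?_ ?_
  · have hshift : aeval H (X + 2 : K[X]) = H + 2 := by rw [map_add, aeval_X, map_ofNat]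
    rw [LinearMap.mem_ker, aeval_comp, hshift, ← Module.End.mul_apply,
      ← (t.semiconjBy_f.aeval _).eq, Module.End.mul_apply, hp, map_zero]
  · simpa [aeval_comp] using hq

theorem isCompl_range_e_ker_f (t : IsSl2Triple H E F) : IsCompl (range E) (ker F) :=
  LinearMap.isCompl_range_ker_of_disjoint t.symm.disjoint_ker_e_range_f.symm
    t.disjoint_ker_e_range_f.symm

end Field

theorem ad (K : Type*) {L : Type*} [Field K] [NeZero (2 : K)] [LieRing L] [LieAlgebra K L]
    {h e f : L} (t : IsSl2Triple h e f) :
    IsSl2Triple (LieAlgebra.ad K L h) (LieAlgebra.ad K L e) (LieAlgebra.ad K L f) where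
  h_ne_zero h0 := smul_ne_zero (two_ne_zero : (2 : K) ≠ 0) t.e_ne_zero <| by
    rw [← t.lie_h_e_smul K, ← LieAlgebra.ad_apply K, h0, LinearMap.zero_apply]
  lie_e_f := by rw [← LieHom.map_lie, t.lie_e_f]
  lie_h_e_nsmul := by rw [← LieHom.map_lie, t.lie_h_e_nsmul, map_nsmul]
  lie_h_f_nsmul := by rw [← LieHom.map_lie, t.lie_h_f_nsmul, map_neg, map_nsmul]

end IsSl2Triple

/-- The direct sum decomposition `𝔤 = [𝔤, X] ⊕ Z_𝔤(Y)` (Section 4) for an `sl₂`-triple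
`(X,H,Y)` of `n×n` real matrices: the space of brackets `[A,X]` and the centralizer of `Y`
intersect trivially and together span the whole matrix space. -/
theorem bracket_range_isCompl_centralizer
    {n : ℕ} (X H Y : Matrix (Fin n) (Fin n) ℝ)
    (hX0 : X ≠ 0)
    (hHX : H * X - X * H = (2 : ℝ) • X)
    (hHY : H * Y - Y * H = (-2 : ℝ) • Y)
    (hXY : X * Y - Y * X = H) :
    (∀ M : Matrix (Fin n) (Fin n) ℝ,
        (∃ A, M = A * X - X * A) → M * Y = Y * M → M = 0) ∧
    (∀ M : Matrix (Fin n) (Fin n) ℝ,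
        ∃ A B : Matrix (Fin n) (Fin n) ℝ,
          B * Y = Y * B ∧ M = (A * X - X * A) + B) := by
  have t : IsSl2Triple H X Y :=
    { h_ne_zero := fun hH => hX0 <| by
        rw [hH, zero_mul, mul_zero, sub_zero, eq_comm, smul_eq_zero] at hHX
        exact hHX.resolve_left two_ne_zero
      lie_e_f := hXY
      lie_h_e_nsmul := by rw [Ring.lie_def, hHX, ofNat_smul_eq_nsmul]
      lie_h_f_nsmul := by rw [Ring.lie_def, hHY, neg_smul, ofNat_smul_eq_nsmul] }
  have hc := (t.ad ℝ).isCompl_range_e_ker_f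
  have had (Z A : Matrix (Fin n) (Fin n) ℝ) : LieAlgebra.ad ℝ _ Z A = Z * A - A * Z := rfl
  refine ⟨fun M ⟨A, hA⟩ hMY => ?_, fun M => ?_⟩
  · refine Submodule.disjoint_def.mp hc.disjoint M ⟨-A, ?_⟩ ?_
    · rw [had, hA]; noncomm_ring
    · rw [LinearMap.mem_ker, had, hMY, sub_self]
  · obtain ⟨_, ⟨A, rfl⟩, B, hB, hAB⟩ :=
      Submodule.mem_sup.mp (hc.codisjoint.eq_top ▸ Submodule.mem_top : M ∈ _)
    rw [LinearMap.mem_ker, had, sub_eq_zero] at hB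
    exact ⟨-A, B, hB.symm, by rw [← hAB, had]; noncomm_ring⟩
end

section
/- Let n, r ≥ 1 and let c : Fin n → Fin r be a monotone surjective function (so the fibers of c are consecutive blocks of {1, …, n}). Let ξ ∈ ℝ^n satisfy ξ_i = ξ_j whenever c(i) = c(j). Let P = {(i, j) : i < j and c(i) = c(j)} be the set of within-block ordered pairs and let Q = ∏_{(i,j): i < j, c(i) ≠ c(j)} (X_i − X_j), a polynomial in MvPolynomial (Fin n) ℝ. Let D be the linear operator on MvPolynomial (Fin n) ℝ obtained by composing, over all (i, j) ∈ P, the operators ∂/∂X_i − ∂/∂X_j (these operators pairwise commute, so the order of composition is immaterial). Then for every polynomial f ∈ MvPolynomial (Fin n) ℝ, evaluating at ξ: (D(Q · f))(ξ) = Q(ξ) · (D f)(ξ). -/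
open MvPolynomial

/-- The set of within-block ordered pairs `(i,j)`, `i < j`, `c i = c j`. -/
def withinBlockPairs {n r : ℕ} (c : Fin n → Fin r) : Finset (Fin n × Fin n) :=
  Finset.univ.filter fun p : Fin n × Fin n => p.1 < p.2 ∧ c p.1 = c p.2

/-- The operator `D`, the composition over all within-block pairs `(i,j)` of the
operators `∂/∂X_i - ∂/∂X_j` (these commute, so the order of composition is
immaterial). -/
noncomputable def blockDerivOp {n r : ℕ} (c : Fin n → Fin r) :
    Module.End ℝ (MvPolynomial (Fin n) ℝ) :=
  ((withinBlockPairs c).toList.map fun p =>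
    ((MvPolynomial.pderiv p.1).toLinearMap - (MvPolynomial.pderiv p.2).toLinearMap :
      Module.End ℝ (MvPolynomial (Fin n) ℝ))).prod

/-- The polynomial `Q = ∏_{i<j, c i ≠ c j} (X_i - X_j)` (product of the cross-block
differences). -/
noncomputable def crossBlockProd {n r : ℕ} (c : Fin n → Fin r) : MvPolynomial (Fin n) ℝ :=
  ∏ p ∈ Finset.univ.filter (fun p : Fin n × Fin n => p.1 < p.2 ∧ c p.1 ≠ c p.2),
    (X p.1 - X p.2)

/-!
Write `Q = Q(ξ) + q` with `q(ξ) = 0`. It suffices that `(D (q g))(ξ) = 0` for every `g`, and by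
linearity for `g = ∏ (X_i - ξ_i)^{u_i}`. If two indices `a ≠ b` of one block have `u_a = u_b`,
then `q g` is invariant under the transposition `(a b)`, which fixes `ξ` and `Q`, while `D` changes
sign under it: the sign of a block-preserving permutation is read off the within-block pairs alone,
since such a permutation keeps every cross-block pair in order. Otherwise the exponents within each
block are distinct, so `g` vanishes at `ξ` to order at least `#P`, hence `q g` to order `#P + 1`,
and `D` is a composition of `#P` derivations, each of which lowers the order of vanishing by at
most one.
-/

namespace MvPolynomial

variable {R σ : Type*} [CommRing R]

theorem pderiv_pderiv_comm (i j : σ) (f : MvPolynomial σ R) :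
    pderiv i (pderiv j f) = pderiv j (pderiv i f) := by
  classical
  have h : ⁅pderiv (R := R) i, pderiv j⁆ = 0 :=
    derivation_ext fun k => by
      rw [Derivation.commutator_apply]
      simp [pderiv_X, Pi.single_apply, apply_ite]
  simpa [Derivation.commutator_apply, sub_eq_zero] using congr($h f)

variable (R) in
noncomputable def pderivDiff (p : σ × σ) :
    Derivation R (MvPolynomial σ R) (MvPolynomial σ R) :=
  pderiv p.1 - pderiv p.2

theorem pderivDiff_apply (p : σ × σ) (f : MvPolynomial σ R) :
    pderivDiff R p f = pderiv p.1 f - pderiv p.2 f :=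
  rfl

theorem pderivDiff_swap (p : σ × σ) : pderivDiff R p.swap = -pderivDiff R p := by
  simp [pderivDiff]

theorem commute_pderivDiff (p q : σ × σ) :
    Commute (pderivDiff R p : Module.End R (MvPolynomial σ R)) (pderivDiff R q) :=
  LinearMap.ext fun f => by
    simp only [Module.End.mul_apply, Derivation.coeFn_coe, pderivDiff_apply, map_sub,
      pderiv_pderiv_comm p.1, pderiv_pderiv_comm p.2]
    abel

theorem rename_list_prod_pderivDiff {τ : Type*} {f : σ → τ} (hf : Function.Injective f)
    (l : List (σ × σ)) (g : MvPolynomial σ R) :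
    rename f ((l.map fun p => (pderivDiff R p : Module.End R (MvPolynomial σ R))).prod g) =
      (l.map fun p => (pderivDiff R (Prod.map f f p) : Module.End R (MvPolynomial τ R))).prod
        (rename f g) := by
  induction l with
  | nil => simp
  | cons p l ih =>
    simp only [List.map_cons, List.prod_cons, Module.End.mul_apply, Derivation.coeFn_coe,
      ← ih, pderivDiff_apply, map_sub, pderiv_rename hf, Prod.map_fst, Prod.map_snd]

section Shift

variable [Fintype σ]

theorem induction_on_prod_X_sub_C_pow (x : σ → R) {motive : MvPolynomial σ R → Prop}
    (add : ∀ p q, motive p → motive q → motive (p + q))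
    (monomial : ∀ (u : σ → ℕ) (a : R), motive (C a * ∏ i, (X i - C (x i)) ^ u i))
    (p : MvPolynomial σ R) : motive p := by
  set shift : MvPolynomial σ R →ₐ[R] MvPolynomial σ R := aeval fun i => X i - C (x i)
  set unshift : MvPolynomial σ R →ₐ[R] MvPolynomial σ R := aeval fun i => X i + C (x i)
  have hshift : shift.comp unshift = AlgHom.id R _ := algHom_ext fun i => by simp [shift, unshift]
  rw [← AlgHom.id_apply (R := R) p, ← hshift, AlgHom.comp_apply]
  induction unshift p using MvPolynomial.induction_on' with
  | monomial u a =>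
    rw [aeval_monomial, algebraMap_eq, Finsupp.prod_fintype _ _ fun i => pow_zero _]
    exact monomial u a
  | add p q hp hq => rw [map_add]; exact add _ _ hp hq

theorem prod_X_sub_C_pow_mem_pow_ker_eval (x : σ → R) (u : σ → ℕ) :
    ∏ i, (X i - C (x i)) ^ u i ∈ RingHom.ker (eval x) ^ ∑ i, u i := by
  rw [← Finset.prod_pow_eq_pow_sum]
  exact Ideal.prod_mem_prod fun i _ => Ideal.pow_mem_pow (by simp) _

theorem rename_prod_X_sub_C_pow {x : σ → R} {u : σ → ℕ} {τ : Equiv.Perm σ}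
    (hx : ∀ i, x (τ i) = x i) (hu : ∀ i, u (τ i) = u i) :
    rename τ (∏ i, (X i - C (x i)) ^ u i) = ∏ i, (X i - C (x i)) ^ u i := by
  simp only [map_prod, map_pow, map_sub, rename_X, rename_C]
  conv_lhs => enter [2, i]; rw [← hx i, ← hu i]
  exact Equiv.prod_comp τ fun i => (X i - C (x i)) ^ u i

end Shift

end MvPolynomial

theorem List.prod_map_smul_map {ι S M : Type*} [CommMonoid S] [Monoid M] [MulAction S M]
    [IsScalarTower S M M] [SMulCommClass S M M] (l : List ι) (ε : ι → S) (x : ι → M) :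
    (l.map fun i => ε i • x i).prod = (l.map ε).prod • (l.map x).prod := by
  induction l with
  | nil => simp
  | cons i l ih => simp only [List.map_cons, List.prod_cons, ih, smul_mul_smul_comm]

theorem Finset.prod_toList_map_comp {ι M : Type*} [Monoid M] {s : Finset ι} {f : ι → M}
    (hf : ∀ i j, Commute (f i) (f j)) {ρ : ι → ι} (hmaps : Set.MapsTo ρ s s)
    (hinj : Set.InjOn ρ s) :
    (s.toList.map (f ∘ ρ)).prod = (s.toList.map f).prod := by
  have hperm : (s.toList.map ρ).Perm s.toList := by
    refine (List.subperm_of_subset ?_ ?_).perm_of_length_le (by simp)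
    · exact s.nodup_toList.map_on fun x hx y hy => hinj (by simpa using hx) (by simpa using hy)
    · intro x hx
      obtain ⟨y, hy, rfl⟩ := List.mem_map.1 hx
      simpa using hmaps (by simpa using hy)
  rw [← List.map_map]
  exact (hperm.map f).prod_eq' (List.pairwise_map.2 (List.pairwise_of_forall fun _ _ => hf _ _))

theorem Derivation.map_mem_pow {R A : Type*} [CommSemiring R] [CommSemiring A] [Algebra R A]
    (D : Derivation R A A) {I : Ideal A} {k : ℕ} {a : A} (ha : a ∈ I ^ (k + 1)) :
    D a ∈ I ^ k := by
  induction k generalizing a with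
  | zero => simp
  | succ k ih =>
    rw [pow_succ] at ha
    refine Submodule.mul_induction_on ha (fun x hx y hy => ?_) fun x y hx hy => ?_
    · rw [D.leibniz, smul_eq_mul, smul_eq_mul]
      exact add_mem (Ideal.mul_mem_right _ _ hx) (pow_succ' I k ▸ Ideal.mul_mem_mul hy (ih hx))
    · rw [map_add]; exact add_mem hx hy

theorem Derivation.list_prod_map_mem_pow {ι R A : Type*} [CommSemiring R] [CommSemiring A]
    [Algebra R A] (d : ι → Derivation R A A) {I : Ideal A} (l : List ι) {k : ℕ} {a : A}
    (ha : a ∈ I ^ (l.length + k)) :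
    (l.map fun i => (d i : Module.End R A)).prod a ∈ I ^ k := by
  induction l generalizing k with
  | nil => simpa using ha
  | cons i l ih =>
    rw [List.map_cons, List.prod_cons, Module.End.mul_apply]
    exact (d i).map_mem_pow (ih (by rwa [List.length_cons, add_right_comm, add_assoc] at ha))

section Orient

variable {α β : Type*} [LinearOrder β]

def orientBy (k : α → β) (p : α × α) : α × α :=
  if k p.1 < k p.2 then p else p.swap

theorem orientBy_lt {k : α → β} {p : α × α} (hp : k p.1 ≠ k p.2) :
    k (orientBy k p).1 < k (orientBy k p).2 := by
  unfold orientBy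
  split_ifs with h
  · exact h
  · exact (not_lt.1 h).lt_of_ne hp.symm

theorem orientBy_injOn [Preorder α] (k : α → β) : Set.InjOn (orientBy k) {p | p.1 < p.2} := by
  intro p hp q hq hpq
  unfold orientBy at hpq
  split_ifs at hpq
  · exact hpq
  · subst hpq; exact absurd hq hp.not_gt
  · subst hpq; exact absurd hp hq.not_gt
  · exact Prod.swap_injective hpq

end Orient

theorem Monotone.lt_and_ne_iff {α β : Type*} [LinearOrder α] [PartialOrder β] {f : α → β}
    (hf : Monotone f) {i j : α} : i < j ∧ f i ≠ f j ↔ f i < f j :=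
  ⟨fun h => (hf h.1.le).lt_of_ne h.2, fun h => ⟨hf.reflect_lt h, h.ne⟩⟩

theorem apply_swap_of_apply_eq {α β : Type*} [DecidableEq α] {f : α → β} {a b : α}
    (h : f a = f b) (i : α) : f (Equiv.swap a b i) = f i := by
  rw [Equiv.swap_apply_def]
  split_ifs with ha hb
  · rw [ha, h]
  · rw [hb, h]
  · rfl

section Blocks

variable {n r : ℕ} {c : Fin n → Fin r}

theorem mem_withinBlockPairs {p : Fin n × Fin n} :
    p ∈ withinBlockPairs c ↔ p.1 < p.2 ∧ c p.1 = c p.2 := by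
  simp [withinBlockPairs]

theorem signAux_eq_prod_withinBlockPairs (hc : Monotone c) {τ : Equiv.Perm (Fin n)}
    (hτ : ∀ i, c (τ i) = c i) :
    (Equiv.Perm.signAux τ : ℤ) =
      ∏ p ∈ withinBlockPairs c, if τ p.1 < τ p.2 then 1 else -1 := by
  have hall : (Equiv.Perm.signAux τ : ℤ) =
      ∏ p ∈ Finset.univ.filter (fun p : Fin n × Fin n => p.1 < p.2),
        if τ p.1 < τ p.2 then 1 else -1 := by
    rw [Equiv.Perm.signAux, Units.coe_prod]
    refine Finset.prod_nbij' (fun x => (x.2, x.1)) (fun p => ⟨p.2, p.1⟩) ?_ ?_ ?_ ?_ ?_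
    all_goals simp only [Equiv.Perm.mem_finPairsLT, Finset.mem_filter, Finset.mem_univ,
      true_and, imp_self, implies_true]
    intro x _
    simp only [← not_lt, apply_ite Units.val, Units.val_neg, Units.val_one, ite_not]
  have hcross : ∏ p ∈ (Finset.univ.filter fun p : Fin n × Fin n => p.1 < p.2).filter
      (fun p => ¬ c p.1 = c p.2), (if τ p.1 < τ p.2 then 1 else -1 : ℤ) = 1 := by
    refine Finset.prod_eq_one fun p hp => if_pos (hc.reflect_lt ?_)
    simp only [Finset.mem_filter, Finset.mem_univ, true_and] at hp
    rw [hτ, hτ]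
    exact hc.lt_and_ne_iff.1 hp
  rw [hall, ← Finset.prod_filter_mul_prod_filter_not _ (fun p => c p.1 = c p.2), hcross,
    mul_one, Finset.filter_filter]
  rfl

theorem blockDerivOp_eq_list_prod_pderivDiff (c : Fin n → Fin r) :
    blockDerivOp c = ((withinBlockPairs c).toList.map fun p =>
      (pderivDiff ℝ p : Module.End ℝ (MvPolynomial (Fin n) ℝ))).prod :=
  rfl

theorem list_prod_pderivDiff_map_eq_signAux_smul (hc : Monotone c) {τ : Equiv.Perm (Fin n)}
    (hτ : ∀ i, c (τ i) = c i) :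
    ((withinBlockPairs c).toList.map fun p =>
      (pderivDiff ℝ (Prod.map τ τ p) : Module.End ℝ (MvPolynomial (Fin n) ℝ))).prod =
      (Equiv.Perm.signAux τ : ℤ) • blockDerivOp c := by
  have hsign : ∀ p,
      (pderivDiff ℝ (Prod.map τ τ p) : Module.End ℝ (MvPolynomial (Fin n) ℝ)) =
      (if τ p.1 < τ p.2 then 1 else -1 : ℤ) •
        (pderivDiff ℝ (Prod.map τ τ (orientBy τ p)) : Module.End ℝ _) := by
    intro p
    unfold orientBy
    split_ifs
    · rw [one_smul]
    · rw [show Prod.map τ τ p.swap = (Prod.map τ τ p).swap from rfl, pderivDiff_swap]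
      simp
  have hmaps : Set.MapsTo (Prod.map τ τ ∘ orientBy τ) (withinBlockPairs c)
      (withinBlockPairs c) := by
    intro p hp
    rw [Finset.mem_coe, mem_withinBlockPairs] at hp ⊢
    refine ⟨orientBy_lt (τ.injective.ne hp.1.ne), ?_⟩
    simp only [Function.comp_apply, orientBy]
    split_ifs <;> simp [hτ, hp.2]
  have hinj : Set.InjOn (Prod.map τ τ ∘ orientBy τ) (withinBlockPairs c) :=
    (τ.injective.prodMap τ.injective).comp_injOn
      ((orientBy_injOn τ).mono fun p hp => (mem_withinBlockPairs.1 hp).1)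
  rw [List.map_congr_left fun p _ => hsign p, List.prod_map_smul_map, Finset.prod_map_toList,
    ← signAux_eq_prod_withinBlockPairs hc hτ, blockDerivOp_eq_list_prod_pderivDiff,
    ← Finset.prod_toList_map_comp
      (f := fun p => (pderivDiff ℝ p : Module.End ℝ (MvPolynomial (Fin n) ℝ)))
      (fun p q => commute_pderivDiff p q) hmaps hinj]
  rfl

theorem blockDerivOp_rename (hc : Monotone c) {τ : Equiv.Perm (Fin n)}
    (hτ : ∀ i, c (τ i) = c i) (h : MvPolynomial (Fin n) ℝ) :
    blockDerivOp c (rename τ h) =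
      (Equiv.Perm.signAux τ : ℤ) • rename τ (blockDerivOp c h) := by
  set s : ℤ := (Equiv.Perm.signAux τ : ℤ)
  calc blockDerivOp c (rename τ h) = (s * s) • blockDerivOp c (rename τ h) := by
        rw [← Units.val_mul, Int.units_mul_self, Units.val_one, one_smul]
    _ = s • (s • blockDerivOp c) (rename τ h) := by rw [LinearMap.smul_apply, smul_smul]
    _ = s • rename τ (blockDerivOp c h) := by
        rw [← list_prod_pderivDiff_map_eq_signAux_smul hc hτ,
          blockDerivOp_eq_list_prod_pderivDiff, rename_list_prod_pderivDiff τ.injective]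

theorem eval_blockDerivOp_eq_zero_of_rename_swap (hc : Monotone c) {ξ : Fin n → ℝ}
    (hξ : ∀ i j, c i = c j → ξ i = ξ j) {a b : Fin n} (hab : a ≠ b) (hcab : c a = c b)
    {h : MvPolynomial (Fin n) ℝ} (hh : rename (Equiv.swap a b) h = h) :
    eval ξ (blockDerivOp c h) = 0 := by
  have hskew := congrArg (eval ξ) (blockDerivOp_rename hc (apply_swap_of_apply_eq hcab) h)
  rw [hh, map_zsmul, eval_rename,
    show ξ ∘ Equiv.swap a b = ξ from funext (apply_swap_of_apply_eq (hξ a b hcab)),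
    Equiv.Perm.signAux_swap hab, Units.val_neg, Units.val_one, neg_one_zsmul] at hskew
  exact self_eq_neg.1 hskew

theorem rename_crossBlockProd (hc : Monotone c) {τ : Equiv.Perm (Fin n)}
    (hτ : ∀ i, c (τ i) = c i) : rename τ (crossBlockProd c) = crossBlockProd c := by
  rw [crossBlockProd, map_prod]
  simp only [map_sub, rename_X]
  refine Finset.prod_equiv (τ.prodCongr τ) (fun p => ?_) fun p _ => rfl
  simp [hc.lt_and_ne_iff, hτ]

theorem card_withinBlockPairs_le_sum (u : Fin n → ℕ)
    (hu : ∀ i j, c i = c j → u i = u j → i = j) :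
    (withinBlockPairs c).card ≤ ∑ i, u i := by
  set S := Finset.univ.filter fun p : Fin n × Fin n => c p.1 = c p.2 ∧ u p.1 < u p.2
  have horient : Set.MapsTo (orientBy u) (withinBlockPairs c) S := by
    intro p hp
    rw [Finset.mem_coe, mem_withinBlockPairs] at hp
    simp only [S, Finset.coe_filter, Finset.mem_univ, true_and, Set.mem_ofPred_eq]
    refine ⟨?_, orientBy_lt fun h => hp.1.ne (hu _ _ hp.2 h)⟩
    unfold orientBy
    split_ifs
    exacts [hp.2, hp.2.symm]
  calc (withinBlockPairs c).card
      ≤ S.card := Finset.card_le_card_of_injOn _ horient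
        ((orientBy_injOn u).mono fun p hp => (mem_withinBlockPairs.1 hp).1)
    _ = ∑ j, (S.filter fun p => p.2 = j).card :=
        Finset.card_eq_sum_card_fiberwise fun p _ => Finset.mem_univ p.2
    _ ≤ ∑ j, u j := Finset.sum_le_sum fun j _ => by
        refine (Finset.card_le_card_of_injOn (fun p => u p.1) (t := Finset.range (u j))
          ?_ ?_).trans (Finset.card_range _).le
        · intro p hp
          simp only [S, Finset.coe_filter, Finset.mem_filter, Finset.mem_univ, true_and,
            Set.mem_ofPred_eq] at hp
          simpa [← hp.2] using hp.1.2
        · intro p hp q hq hpq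
          simp only [S, Finset.coe_filter, Finset.mem_filter, Finset.mem_univ, true_and,
            Set.mem_ofPred_eq] at hp hq
          have h₂ : p.2 = q.2 := hp.2.trans hq.2.symm
          exact Prod.ext (hu _ _ (hp.1.1.trans (h₂ ▸ hq.1.1.symm)) hpq) h₂

theorem eval_blockDerivOp_mul_prod_X_sub_C_pow (hc : Monotone c) {ξ : Fin n → ℝ}
    (hξ : ∀ i j, c i = c j → ξ i = ξ j) {q : MvPolynomial (Fin n) ℝ} (hq : eval ξ q = 0)
    (hqsymm : ∀ a b, c a = c b → rename (Equiv.swap a b) q = q) (u : Fin n → ℕ) :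
    eval ξ (blockDerivOp c (q * ∏ i, (X i - C (ξ i)) ^ u i)) = 0 := by
  by_cases hu : ∀ i j, c i = c j → u i = u j → i = j
  · have hmem : q * ∏ i, (X i - C (ξ i)) ^ u i ∈
        RingHom.ker (eval ξ) ^ ((withinBlockPairs c).toList.length + 1) := by
      rw [Finset.length_toList, pow_succ']
      exact Ideal.mul_mem_mul hq (Ideal.pow_le_pow_right (card_withinBlockPairs_le_sum u hu)
        (prod_X_sub_C_pow_mem_pow_ker_eval ξ u))
    have := Derivation.list_prod_map_mem_pow (pderivDiff ℝ) _ hmem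
    rw [pow_one] at this
    exact RingHom.mem_ker.1 this
  · push Not at hu
    obtain ⟨a, b, hcab, huab, hab⟩ := hu
    refine eval_blockDerivOp_eq_zero_of_rename_swap hc hξ hab hcab ?_
    rw [map_mul, hqsymm a b hcab, rename_prod_X_sub_C_pow
      (apply_swap_of_apply_eq (hξ a b hcab)) (apply_swap_of_apply_eq huab)]

theorem eval_blockDerivOp_mul_eq_zero (hc : Monotone c) {ξ : Fin n → ℝ}
    (hξ : ∀ i j, c i = c j → ξ i = ξ j) {q : MvPolynomial (Fin n) ℝ} (hq : eval ξ q = 0)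
    (hqsymm : ∀ a b, c a = c b → rename (Equiv.swap a b) q = q) (f : MvPolynomial (Fin n) ℝ) :
    eval ξ (blockDerivOp c (q * f)) = 0 := by
  induction f using induction_on_prod_X_sub_C_pow ξ with
  | add f g hf hg => rw [mul_add, map_add, map_add, hf, hg, add_zero]
  | monomial u a =>
    rw [mul_left_comm, ← smul_eq_C_mul, map_smul, smul_eval,
      eval_blockDerivOp_mul_prod_X_sub_C_pow hc hξ hq hqsymm u, mul_zero]

end Blocks

theorem pderiv_block_commutes_with_cross_product_general
    {n r : ℕ}
    (c : Fin n → Fin r) (hc : Monotone c)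
    (ξ : Fin n → ℝ) (hξ : ∀ i j, c i = c j → ξ i = ξ j)
    (f : MvPolynomial (Fin n) ℝ) :
    MvPolynomial.eval ξ (blockDerivOp c (crossBlockProd c * f))
      = MvPolynomial.eval ξ (crossBlockProd c) *
          MvPolynomial.eval ξ (blockDerivOp c f) := by
  set Q := crossBlockProd c
  have hvanish : eval ξ (Q - C (eval ξ Q)) = 0 := by simp
  have hsymm : ∀ a b, c a = c b →
      rename (Equiv.swap a b) (Q - C (eval ξ Q)) = Q - C (eval ξ Q) := fun a b hcab => by
    rw [map_sub, rename_C, rename_crossBlockProd hc (apply_swap_of_apply_eq hcab)]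
  calc eval ξ (blockDerivOp c (Q * f))
      = eval ξ (blockDerivOp c ((Q - C (eval ξ Q)) * f)) +
          eval ξ (blockDerivOp c (eval ξ Q • f)) := by
        rw [← map_add, ← map_add, smul_eq_C_mul, ← add_mul, sub_add_cancel]
    _ = eval ξ Q * eval ξ (blockDerivOp c f) := by
        rw [eval_blockDerivOp_mul_eq_zero hc hξ hvanish hsymm, zero_add, map_smul, smul_eval]

/-- Lemma 3.3 of the paper, `[∂(π_L), π^∨_{G/L}](ξ) = 0`, for `𝔤 = 𝔤𝔩(n,ℝ)`: if `D` is
the composition of the operators `∂/∂X_i - ∂/∂X_j` over within-block pairs `(i,j)` of a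
block decomposition `c`, `Q` is the product of the cross-block differences `X_i - X_j`,
and `ξ` is constant on blocks, then `(D(Q·f))(ξ) = Q(ξ) · (Df)(ξ)` for every
polynomial `f`. -/
theorem pderiv_block_commutes_with_cross_product
    {n r : ℕ} (hn : 1 ≤ n) (hr : 1 ≤ r)
    (c : Fin n → Fin r) (hc : Monotone c) (hcs : Function.Surjective c)
    (ξ : Fin n → ℝ) (hξ : ∀ i j, c i = c j → ξ i = ξ j)
    (f : MvPolynomial (Fin n) ℝ) :
    MvPolynomial.eval ξ (blockDerivOp c (crossBlockProd c * f))
      = MvPolynomial.eval ξ (crossBlockProd c) *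
          MvPolynomial.eval ξ (blockDerivOp c f) :=
  pderiv_block_commutes_with_cross_product_general c hc ξ hξ f
end

section
/- Let n, r ≥ 1 and let c : Fin n → Fin r be a monotone function. Let W = {σ ∈ Perm(Fin n) : c ∘ σ = c} be the group of permutations preserving each block (fiber of c), acting on MvPolynomial (Fin n) ℝ by permuting the variables, and let sign(σ) denote the sign of the permutation σ. Let P = {(i, j) : i < j and c(i) = c(j)} be the set of within-block ordered pairs, and for a subset T ⊆ P write π_T = ∏_{(i,j) ∈ T} (X_i − X_j). Then: (a) for every nonempty subset S ⊆ P, the polynomial ∑_{σ ∈ W} sign(σ) · σ·(π_{P∖S}) is zero; and (b) ∑_{σ ∈ W} sign(σ) · σ·(π_P) = |W| · π_P. -/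
/-!
The skew-symmetrization `A(Q) = ∑_{σ ∈ W} sign σ • σ·Q` is `W`-alternating, so its coefficient
at an exponent `m` vanishes as soon as `m i = m j` for two indices `i ≠ j` of one block. A nonzero
`A(Q)` therefore has a monomial whose exponents are distinct within each block, so its degree is
at least `∑ (k choose 2) = |P|`; as `deg π_{P∖S} < |P|` for nonempty `S`, this forces
`A(π_{P∖S}) = 0`. For (b), `σ·π_P = sign σ • π_P` for `σ ∈ W`: the full Vandermonde product picks
up `sign σ`, while the product over pairs from different blocks is `W`-invariant, because a
block-preserving permutation keeps indices of different blocks in order when `c` is monotone.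
-/

open MvPolynomial Finset Equiv

lemma card_filter_lt_mul_two {α β : Type*} [LinearOrder β] {s : Finset (α × α)}
    (hs : ∀ p ∈ s, p.swap ∈ s) (f : α → β) (hf : ∀ p ∈ s, f p.1 ≠ f p.2) :
    #{p ∈ s | f p.1 < f p.2} * 2 = #s := by
  have hswap : #{p ∈ s | f p.2 < f p.1} = #{p ∈ s | f p.1 < f p.2} :=
    card_nbij' Prod.swap Prod.swap (fun p hp => by simp_all) (fun p hp => by simp_all)
      (fun _ _ => rfl) (fun _ _ => rfl)
  have hnot : {p ∈ s | ¬ f p.1 < f p.2} = {p ∈ s | f p.2 < f p.1} :=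
    filter_congr fun p hp => not_lt.trans (hf p hp).symm.le_iff_lt
  rw [← card_filter_add_card_filter_not (s := s) (fun p => f p.1 < f p.2), hnot, hswap, mul_two]

lemma coeff_eq_zero_of_rename_swap_eq_neg {ι R : Type*} [DecidableEq ι] [CommRing R]
    [IsAddTorsionFree R] {p : MvPolynomial ι R} {i j : ι} (hp : rename (swap i j) p = -p)
    {m : ι →₀ ℕ} (hm : m i = m j) : coeff m p = 0 := by
  have hswap : Finsupp.mapDomain (swap i j) m = m := by
    ext k
    rw [Finsupp.mapDomain_equiv_apply, symm_swap, swap_apply_def]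
    split_ifs <;> simp_all
  have := coeff_rename_mapDomain _ (swap i j).injective p m
  rwa [hswap, hp, coeff_neg, eq_comm, self_eq_neg] at this

lemma totalDegree_prod_X_sub_X_le {ι R : Type*} [CommRing R] (s : Finset (ι × ι)) :
    (∏ p ∈ s, (X p.1 - X p.2 : MvPolynomial ι R)).totalDegree ≤ #s := by
  have hX : ∀ i, (X i : MvPolynomial ι R).totalDegree ≤ 1 := fun i =>
    (totalDegree_monomial_le _ _).trans (by simp)
  refine (totalDegree_finsetProd _ _).trans ?_
  rw [card_eq_sum_ones]
  exact sum_le_sum fun p _ => (totalDegree_sub _ _).trans (max_le (hX _) (hX _))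

lemma prod_sub_comp_perm {R : Type*} [CommRing R] {n : ℕ} (v : Fin n → R) (σ : Perm (Fin n)) :
    ∏ p ∈ ({p | p.1 < p.2} : Finset (Fin n × Fin n)), (v (σ p.1) - v (σ p.2)) =
      Perm.sign σ * ∏ p ∈ ({p | p.1 < p.2} : Finset (Fin n × Fin n)), (v p.1 - v p.2) := by
  have hdet : ∀ w : Fin n → R,
      ∏ p ∈ ({p | p.1 < p.2} : Finset (Fin n × Fin n)), (w p.1 - w p.2) =
        (Matrix.vandermonde (-w)).det := fun w => by
    rw [Matrix.det_vandermonde, prod_filter, Fintype.prod_prod_type]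
    simp [← prod_filter, filter_lt_eq_Ioi, neg_add_eq_sub]
  rw [hdet fun i => v (σ i), hdet, ← Matrix.det_permute]
  rfl

variable {ι κ R : Type*} [Fintype ι] [CommRing R]

section BlockPerms

variable [DecidableEq ι] [DecidableEq κ] {c : ι → κ}

variable (c) in
def blockPerms : Finset (Perm ι) := {σ | ∀ i, c (σ i) = c i}

lemma mem_blockPerms {σ : Perm ι} : σ ∈ blockPerms c ↔ ∀ i, c (σ i) = c i := by
  simp [blockPerms]

lemma swap_mem_blockPerms {i j : ι} (h : c i = c j) : swap i j ∈ blockPerms c := by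
  rw [mem_blockPerms]
  intro k
  rw [swap_apply_def]
  split_ifs <;> simp_all

variable (c) in
noncomputable def skewSymmetrization (Q : MvPolynomial ι R) : MvPolynomial ι R :=
  ∑ σ ∈ blockPerms c, (Perm.sign σ : ℤ) • rename σ Q

lemma rename_skewSymmetrization {τ : Perm ι} (hτ : τ ∈ blockPerms c) (Q : MvPolynomial ι R) :
    rename τ (skewSymmetrization c Q) = (Perm.sign τ : ℤ) • skewSymmetrization c Q := by
  rw [mem_blockPerms] at hτ
  rw [skewSymmetrization, map_sum, smul_sum]
  refine sum_equiv (Equiv.mulLeft τ) (fun σ => by simp [mem_blockPerms, hτ]) fun σ _ => ?_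
  rw [map_zsmul, rename_rename, smul_smul, coe_mulLeft, Perm.sign_mul, Units.val_mul,
    ← mul_assoc, ← Units.val_mul, Int.units_mul_self, Units.val_one, one_mul, Perm.coe_mul]

lemma totalDegree_skewSymmetrization_le (Q : MvPolynomial ι R) :
    (skewSymmetrization c Q).totalDegree ≤ Q.totalDegree :=
  (totalDegree_finsetSum _ _).trans <| Finset.sup_le fun _ _ =>
    (totalDegree_smul_le _ _).trans (totalDegree_rename_le _ _)

end BlockPerms

section BlockPairs

variable [LinearOrder ι] [DecidableEq κ] {c : ι → κ}

variable (c) in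
def blockPairs : Finset (ι × ι) := {p | p.1 < p.2 ∧ c p.1 = c p.2}

/-- Both `<` and `m` orient each pair of distinct block-mates one way only, so `blockPairs c` is
equinumerous with the pairs `(i, j)` of block-mates with `m i < m j`; and each `j` has at most `m j`
block-mates `i` with `m i < m j`. -/
lemma card_blockPairs_le_sum (m : ι → ℕ) (hm : ∀ i j, c i = c j → m i = m j → i = j) :
    #(blockPairs c) ≤ ∑ i, m i := by
  set s : Finset (ι × ι) := {p | c p.1 = c p.2 ∧ p.1 ≠ p.2}
  have hs : ∀ p ∈ s, p.swap ∈ s := fun p hp => by simp_all [s, eq_comm]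
  have hblock : blockPairs c = {p ∈ s | p.1 < p.2} := by
    ext p
    simp only [blockPairs, s, mem_filter, mem_univ, true_and]
    exact ⟨fun h => ⟨⟨h.2, h.1.ne⟩, h.1⟩, fun h => ⟨h.2, h.1.1⟩⟩
  have hm_lt : {p ∈ s | m p.1 < m p.2} =
      ({p | c p.1 = c p.2 ∧ m p.1 < m p.2} : Finset (ι × ι)) := by
    ext p
    simp only [s, mem_filter, mem_univ, true_and]
    exact ⟨fun h => ⟨h.1.1, h.2⟩, fun h => ⟨⟨h.1, fun he => h.2.ne (congrArg m he)⟩, h.2⟩⟩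
  have hcard : #(blockPairs c) = #({p | c p.1 = c p.2 ∧ m p.1 < m p.2} : Finset (ι × ι)) := by
    have h_lt := card_filter_lt_mul_two hs id fun p hp => (mem_filter.1 hp).2.2
    have h_m := card_filter_lt_mul_two hs m fun p hp he =>
      (mem_filter.1 hp).2.2 (hm _ _ (mem_filter.1 hp).2.1 he)
    rw [hblock, ← hm_lt]
    simp only [id] at h_lt
    omega
  have hfiber : ∀ j, #{i | c i = c j ∧ m i < m j} ≤ m j := fun j => by
    simpa using card_le_card_of_injOn m (t := range (m j)) (fun i hi => by simp_all)
      (fun i hi i' hi' he => hm i i' (by simp_all) he)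
  calc #(blockPairs c) = ∑ j, #{i | c i = c j ∧ m i < m j} := by
        rw [hcard, card_filter, Fintype.sum_prod_type_right]
        simp only [card_filter]
    _ ≤ ∑ j, m j := sum_le_sum fun j _ => hfiber j

lemma card_blockPairs_le_totalDegree [IsAddTorsionFree R] {p : MvPolynomial ι R}
    (hp : ∀ τ ∈ blockPerms c, rename τ p = (Perm.sign τ : ℤ) • p) (hp0 : p ≠ 0) :
    #(blockPairs c) ≤ p.totalDegree := by
  obtain ⟨m, hm⟩ := support_nonempty.2 hp0
  have hinj : ∀ i j, c i = c j → m i = m j → i = j := fun i j hc hmij => by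
    by_contra hij
    have hneg : rename (swap i j) p = -p := by
      rw [hp _ (swap_mem_blockPerms hc), Perm.sign_swap hij]
      simp
    exact mem_support_iff.1 hm (coeff_eq_zero_of_rename_swap_eq_neg hneg hmij)
  calc #(blockPairs c) ≤ ∑ i, m i := card_blockPairs_le_sum m hinj
    _ = m.sum fun _ e => e := (Finsupp.sum_fintype m (fun _ e => e) fun _ => rfl).symm
    _ ≤ p.totalDegree := le_totalDegree hm

variable (c) in
lemma skewSymmetrization_prod_sdiff_blockPairs_eq_zero [IsAddTorsionFree R]
    {S : Finset (ι × ι)} (hS : S ⊆ blockPairs c) (hS0 : S.Nonempty) :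
    skewSymmetrization c (∏ p ∈ blockPairs c \ S, (X p.1 - X p.2 : MvPolynomial ι R)) = 0 := by
  by_contra h
  have hdeg : #(blockPairs c) ≤ #(blockPairs c \ S) :=
    calc #(blockPairs c)
        ≤ _ := card_blockPairs_le_totalDegree (fun τ hτ => rename_skewSymmetrization hτ _) h
      _ ≤ _ := totalDegree_skewSymmetrization_le _
      _ ≤ _ := totalDegree_prod_X_sub_X_le _
  exact (card_lt_card (sdiff_ssubset hS hS0)).not_ge hdeg

end BlockPairs

section Monotone

variable [LinearOrder ι] [LinearOrder κ] {c : ι → κ}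

variable (c) in
def crossPairs : Finset (ι × ι) := {p | p.1 < p.2 ∧ c p.1 ≠ c p.2}

lemma lt_iff_lt_of_mem_blockPerms (hc : Monotone c) {σ : Perm ι} (hσ : σ ∈ blockPerms c)
    {i j : ι} (hij : c i ≠ c j) : σ i < σ j ↔ i < j := by
  have hlt : ∀ {a b}, c a ≠ c b → (a < b ↔ c a < c b) := fun hab =>
    ⟨fun h => (hc h.le).lt_of_ne hab, hc.reflect_lt⟩
  rw [mem_blockPerms] at hσ
  rw [hlt (by rwa [hσ, hσ]), hσ, hσ, ← hlt hij]

lemma rename_prod_crossPairs (hc : Monotone c) {σ : Perm ι} (hσ : σ ∈ blockPerms c) :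
    rename σ (∏ p ∈ crossPairs c, (X p.1 - X p.2 : MvPolynomial ι R)) =
      ∏ p ∈ crossPairs c, (X p.1 - X p.2) := by
  rw [map_prod]
  refine prod_equiv (σ.prodCongr σ) (fun p => ?_) fun p _ => by simp
  have hσ' := mem_blockPerms.1 hσ
  simp only [crossPairs, mem_filter, mem_univ, true_and, prodCongr_apply, Prod.map_fst,
    Prod.map_snd, hσ']
  exact and_congr_left fun hp => (lt_iff_lt_of_mem_blockPerms hc hσ hp).symm

lemma rename_prod_blockPairs [IsDomain R] {n : ℕ} {c : Fin n → κ} (hc : Monotone c)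
    {σ : Perm (Fin n)} (hσ : σ ∈ blockPerms c) :
    rename σ (∏ p ∈ blockPairs c, (X p.1 - X p.2 : MvPolynomial (Fin n) R)) =
      (Perm.sign σ : ℤ) • ∏ p ∈ blockPairs c, (X p.1 - X p.2) := by
  set B := ∏ p ∈ blockPairs c, (X p.1 - X p.2 : MvPolynomial (Fin n) R)
  set C := ∏ p ∈ crossPairs c, (X p.1 - X p.2 : MvPolynomial (Fin n) R)
  have hsplit : B * C = ∏ p ∈ ({p | p.1 < p.2} : Finset (Fin n × Fin n)), (X p.1 - X p.2) := by
    rw [← prod_filter_mul_prod_filter_not ({p | p.1 < p.2} : Finset (Fin n × Fin n))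
      (fun p => c p.1 = c p.2), filter_filter, filter_filter]
    rfl
  have hC : C ≠ 0 := prod_ne_zero_iff.2 fun p hp =>
    sub_ne_zero.2 fun h => (mem_filter.1 hp).2.1.ne (X_injective h)
  apply mul_right_cancel₀ hC
  calc rename σ B * C = rename σ (B * C) := by rw [map_mul, rename_prod_crossPairs hc hσ]
    _ = ((Perm.sign σ : ℤ) : MvPolynomial (Fin n) R) * (B * C) := by
        rw [hsplit, map_prod]
        simp only [map_sub, rename_X]
        exact prod_sub_comp_perm X σ
    _ = _ := by rw [zsmul_eq_mul, mul_assoc]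

lemma skewSymmetrization_prod_blockPairs [IsDomain R] {n : ℕ} {c : Fin n → κ}
    (hc : Monotone c) :
    skewSymmetrization c (∏ p ∈ blockPairs c, (X p.1 - X p.2 : MvPolynomial (Fin n) R)) =
      #(blockPerms c) • ∏ p ∈ blockPairs c, (X p.1 - X p.2) := by
  rw [skewSymmetrization, ← sum_const]
  refine sum_congr rfl fun σ hσ => ?_
  rw [rename_prod_blockPairs hc hσ, smul_smul, ← Units.val_mul, Int.units_mul_self,
    Units.val_one, one_smul]

end Monotone

theorem skew_symmetrization_of_partial_products_general
    {n r : ℕ}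
    (c : Fin n → Fin r) (hc : Monotone c) :
    (∀ S : Finset (Fin n × Fin n),
        S ⊆ Finset.univ.filter (fun p : Fin n × Fin n => p.1 < p.2 ∧ c p.1 = c p.2) →
        S.Nonempty →
        ∑ σ ∈ Finset.univ.filter (fun σ : Equiv.Perm (Fin n) => ∀ i, c (σ i) = c i),
          (Equiv.Perm.sign σ : ℤ) •
            MvPolynomial.rename (⇑σ)
              (∏ p ∈ (Finset.univ.filter
                  (fun p : Fin n × Fin n => p.1 < p.2 ∧ c p.1 = c p.2)) \ S,
                ((X p.1 - X p.2 : MvPolynomial (Fin n) ℝ)))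
          = 0) ∧
    (∑ σ ∈ Finset.univ.filter (fun σ : Equiv.Perm (Fin n) => ∀ i, c (σ i) = c i),
        (Equiv.Perm.sign σ : ℤ) •
          MvPolynomial.rename (⇑σ)
            (∏ p ∈ Finset.univ.filter
                (fun p : Fin n × Fin n => p.1 < p.2 ∧ c p.1 = c p.2),
              ((X p.1 - X p.2 : MvPolynomial (Fin n) ℝ)))
      = (Finset.univ.filter
            (fun σ : Equiv.Perm (Fin n) => ∀ i, c (σ i) = c i)).card •
          ∏ p ∈ Finset.univ.filter
              (fun p : Fin n × Fin n => p.1 < p.2 ∧ c p.1 = c p.2),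
            ((X p.1 - X p.2 : MvPolynomial (Fin n) ℝ))) := by
  -- the statement decides `∀ i : Fin n` by a `Fin`-specific instance, not the one in `blockPerms`
  have hW : ({σ | ∀ i, c (σ i) = c i} : Finset (Perm (Fin n))) = blockPerms c := by
    ext
    simp [mem_blockPerms]
  rw [hW]
  exact ⟨fun _ hS hS0 => skewSymmetrization_prod_sdiff_blockPairs_eq_zero c hS hS0,
    skewSymmetrization_prod_blockPairs hc⟩

/-- Skew-symmetrization identities from the proof of Lemma 3.3 for `𝔤 = 𝔤𝔩(n,ℝ)`:
for the group `W` of permutations preserving the blocks (fibers) of a monotone map `c`,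
and `P` the set of within-block ordered pairs with `π_T = ∏_{(i,j)∈T} (X_i - X_j)`,
(a) `∑_{σ∈W} sign(σ) σ·π_{P∖S} = 0` for every nonempty `S ⊆ P`, and
(b) `∑_{σ∈W} sign(σ) σ·π_P = |W| π_P`. -/
theorem skew_symmetrization_of_partial_products
    {n r : ℕ} (hn : 1 ≤ n) (hr : 1 ≤ r)
    (c : Fin n → Fin r) (hc : Monotone c) :
    (∀ S : Finset (Fin n × Fin n),
        S ⊆ Finset.univ.filter (fun p : Fin n × Fin n => p.1 < p.2 ∧ c p.1 = c p.2) →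
        S.Nonempty →
        ∑ σ ∈ Finset.univ.filter (fun σ : Equiv.Perm (Fin n) => ∀ i, c (σ i) = c i),
          (Equiv.Perm.sign σ : ℤ) •
            MvPolynomial.rename (⇑σ)
              (∏ p ∈ (Finset.univ.filter
                  (fun p : Fin n × Fin n => p.1 < p.2 ∧ c p.1 = c p.2)) \ S,
                ((X p.1 - X p.2 : MvPolynomial (Fin n) ℝ)))
          = 0) ∧
    (∑ σ ∈ Finset.univ.filter (fun σ : Equiv.Perm (Fin n) => ∀ i, c (σ i) = c i),
        (Equiv.Perm.sign σ : ℤ) •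
          MvPolynomial.rename (⇑σ)
            (∏ p ∈ Finset.univ.filter
                (fun p : Fin n × Fin n => p.1 < p.2 ∧ c p.1 = c p.2),
              ((X p.1 - X p.2 : MvPolynomial (Fin n) ℝ)))
      = (Finset.univ.filter
            (fun σ : Equiv.Perm (Fin n) => ∀ i, c (σ i) = c i)).card •
          ∏ p ∈ Finset.univ.filter
              (fun p : Fin n × Fin n => p.1 < p.2 ∧ c p.1 = c p.2),
            ((X p.1 - X p.2 : MvPolynomial (Fin n) ℝ))) :=
  skew_symmetrization_of_partial_products_general c hc
end

section
/- Let n ≥ 1 and let λ = (λ_1, …, λ_n) ∈ ℝ^n. Let I = {(i, j) ∈ Fin n × Fin n : i ≠ j}, and define the square matrix M indexed by I with entries M_{(i,j),(k,l)} = tr(diag(λ) · (E_{ij} E_{kl} − E_{kl} E_{ij})), where E_{ij} denotes the matrix unit with a 1 in position (i,j) and zeros elsewhere, and diag(λ) is the diagonal matrix with entries λ_1, …, λ_n. Then det M = ∏_{1 ≤ i < j ≤ n} (λ_i − λ_j)². -/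
/-!
The entry `λ([E_ij, E_kl])` vanishes unless `(k, l) = (j, i)`, where it is `λ_i - λ_j`. Pairing
each off-diagonal position `(i, j)`, `i < j`, with its transpose `(j, i)` therefore makes the
matrix block diagonal, with `2 × 2` blocks `!![0, λ_i - λ_j; λ_j - λ_i, 0]` of determinant
`(λ_i - λ_j)²`.
-/

open Matrix

section Trace

variable {ι R : Type*} [Fintype ι] [DecidableEq ι] [CommRing R] (d : ι → R) (i j k l : ι)

theorem trace_diagonal_mul_single_mul_single :
    trace (diagonal d * (single i j 1 * single k l 1)) = if (k, l) = (j, i) then d i else 0 := by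
  rw [← Matrix.mul_assoc, trace_mul_comm, trace_single_mul]
  simp only [mul_apply, diagonal_apply, single_apply, ite_and]
  split_ifs <;> simp_all

theorem trace_diagonal_mul_commutator_single :
    trace (diagonal d * (single i j 1 * single k l 1 - single k l 1 * single i j 1)) =
      if (k, l) = (j, i) then d i - d j else 0 := by
  rw [mul_sub, trace_sub, trace_diagonal_mul_single_mul_single,
    trace_diagonal_mul_single_mul_single]
  split_ifs <;> simp_all

end Trace

section OffDiagonal

variable (α : Type*) [LinearOrder α]

def offDiagEquiv : {p : α × α // p.1 ≠ p.2} ≃ Fin 2 × {p : α × α // p.1 < p.2} where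
  toFun p := if h : p.1.1 < p.1.2 then (0, ⟨p.1, h⟩)
    else (1, ⟨p.1.swap, lt_of_le_of_ne (not_lt.1 h) p.2.symm⟩)
  invFun q := if q.1 = 0 then ⟨q.2.1, q.2.2.ne⟩ else ⟨q.2.1.swap, q.2.2.ne'⟩
  left_inv p := by
    obtain ⟨⟨i, j⟩, hij⟩ := p
    by_cases h : i < j <;> simp [h]
  right_inv q := by
    obtain ⟨b, ⟨⟨i, j⟩, hij⟩⟩ := q
    fin_cases b <;> simp [hij, hij.not_gt]

variable {α} {R : Type*} [CommRing R] (d : α → R)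

theorem submatrix_offDiagEquiv_symm_eq_blockDiagonal :
    (of fun p q : {p : α × α // p.1 ≠ p.2} =>
        if q.1 = p.1.swap then d p.1.1 - d p.1.2 else 0).submatrix
      (offDiagEquiv α).symm (offDiagEquiv α).symm =
    blockDiagonal fun s : {p : α × α // p.1 < p.2} =>
      !![0, d s.1.1 - d s.1.2; d s.1.2 - d s.1.1, 0] := by
  ext ⟨a, ⟨⟨i, j⟩, hij⟩⟩ ⟨b, ⟨⟨k, l⟩, hkl⟩⟩
  fin_cases a <;> fin_cases b <;> simp [offDiagEquiv, blockDiagonal_apply]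
  all_goals grind

theorem det_of_ite_eq_swap [Fintype α] :
    det (of fun p q : {p : α × α // p.1 ≠ p.2} =>
        if q.1 = p.1.swap then d p.1.1 - d p.1.2 else 0) =
      ∏ p ∈ Finset.univ.filter (fun p : α × α => p.1 < p.2), (d p.1 - d p.2) ^ 2 := by
  rw [← det_submatrix_equiv_self (offDiagEquiv α).symm,
    submatrix_offDiagEquiv_symm_eq_blockDiagonal, det_blockDiagonal,
    Finset.prod_subtype _ (fun _ => Finset.mem_filter_univ _)]
  refine Finset.prod_congr rfl fun s _ => ?_
  rw [det_fin_two_of]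
  ring

end OffDiagonal

theorem det_kostant_kirillov_form_on_matrix_units_general
    {n : ℕ} (lam : Fin n → ℝ) :
    Matrix.det
      (Matrix.of fun p q : {p : Fin n × Fin n // p.1 ≠ p.2} =>
        Matrix.trace (Matrix.diagonal lam *
          (Matrix.single p.1.1 p.1.2 (1 : ℝ) * Matrix.single q.1.1 q.1.2 1 -
            Matrix.single q.1.1 q.1.2 1 * Matrix.single p.1.1 p.1.2 1)))
      = ∏ p ∈ Finset.univ.filter (fun p : Fin n × Fin n => p.1 < p.2),
          (lam p.1 - lam p.2) ^ 2 := by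
  simp only [trace_diagonal_mul_commutator_single]
  exact det_of_ite_eq_swap lam

/-- The determinant computation `det(ω_λ(X_α, X_β)) = ∏_{α∈Δ⁺} λ(H_α)²` from the proof
of Lemma 3.2, for `𝔤 = 𝔤𝔩(n,ℝ)` with the diagonal Cartan: the Kostant–Kirillov form
evaluated on the off-diagonal matrix units `E_{ij}` (`i ≠ j`) has determinant
`∏_{i<j} (λ_i - λ_j)²`. -/
theorem det_kostant_kirillov_form_on_matrix_units
    {n : ℕ} (hn : 1 ≤ n) (lam : Fin n → ℝ) :
    Matrix.det
      (Matrix.of fun p q : {p : Fin n × Fin n // p.1 ≠ p.2} =>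
        Matrix.trace (Matrix.diagonal lam *
          (Matrix.single p.1.1 p.1.2 (1 : ℝ) * Matrix.single q.1.1 q.1.2 1 -
            Matrix.single q.1.1 q.1.2 1 * Matrix.single p.1.1 p.1.2 1)))
      = ∏ p ∈ Finset.univ.filter (fun p : Fin n × Fin n => p.1 < p.2),
          (lam p.1 - lam p.2) ^ 2 :=
  det_kostant_kirillov_form_on_matrix_units_general lam
end
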